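/- arXiv:2410.14067 — 5 statements merged into one kernel-verified Lean document; each statement's English description precedes it below -/
import Mathlib

section
/- Let α ∈ [0,1] and let m, n, t be natural numbers with t ≥ n + m. Then the absolute value of the m-th forward difference of the sequence X = (1, α, α², ..., α^{t-1}) at index n equals α^n·(1−α)^m, and is bounded above by (m/(n+m))^m · (n/(n+m))^n. -/
/-!
Each forward difference multiplies a geometric sequence by `α - 1`, so the `m`-th difference at
`n` is `α ^ n * (α - 1) ^ m`. With `a = α` and `b = 1 - α`, weighted AM-GM with weights
`x = n / (n + m)` and `y = m / (n + m)` gives `(a / x) ^ x * (b / y) ^ y ≤ a + b = 1`; raising this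
to the power `n + m` yields `a ^ n * b ^ m ≤ x ^ n * y ^ m`.
-/

/-- Forward difference of a sequence. -/
def fdiff (X : ℕ → ℝ) : ℕ → ℝ := fun k => X (k + 1) - X k

lemma fdiff_iterate_pow (α : ℝ) (m : ℕ) :
    fdiff^[m] (fun k => α ^ k) = fun k => α ^ k * (α - 1) ^ m := by
  induction m with
  | zero => simp
  | succ m ih =>
    rw [Function.iterate_succ_apply', ih]
    funext k
    simp only [fdiff]
    ring

lemma pow_mul_pow_le_of_add_eq_one_of_pos {a b : ℝ} (ha : 0 ≤ a) (hb : 0 ≤ b) (hab : a + b = 1)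
    {n m : ℕ} (hn : 0 < n) (hm : 0 < m) :
    a ^ n * b ^ m ≤ ((n : ℝ) / (n + m)) ^ n * ((m : ℝ) / (n + m)) ^ m := by
  set s : ℝ := n + m
  set x : ℝ := n / s
  set y : ℝ := m / s
  have hs : 0 < s := by positivity
  have hx : 0 < x := by positivity
  have hy : 0 < y := by positivity
  have hxy : x + y = 1 := by rw [← add_div, div_self hs.ne']
  have amgm : (a / x) ^ x * (b / y) ^ y ≤ 1 := by
    have := Real.geom_mean_le_arith_mean2_weighted hx.le hy.le (div_nonneg ha hx.le)
      (div_nonneg hb hy.le) hxy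
    rwa [mul_div_cancel₀ _ hx.ne', mul_div_cancel₀ _ hy.ne', hab] at this
  have amgm_pow : (a / x) ^ n * (b / y) ^ m ≤ 1 := by
    have hxs : x * s = n := div_mul_cancel₀ _ hs.ne'
    have hys : y * s = m := div_mul_cancel₀ _ hs.ne'
    have := Real.rpow_le_one (by positivity) amgm hs.le
    rwa [Real.mul_rpow (by positivity) (by positivity), ← Real.rpow_mul (by positivity),
      ← Real.rpow_mul (by positivity), hxs, hys, Real.rpow_natCast, Real.rpow_natCast] at this
  calc a ^ n * b ^ m = (a / x) ^ n * (b / y) ^ m * (x ^ n * y ^ m) := by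
        rw [mul_mul_mul_comm, ← mul_pow, ← mul_pow, div_mul_cancel₀ _ hx.ne',
          div_mul_cancel₀ _ hy.ne']
    _ ≤ x ^ n * y ^ m := mul_le_of_le_one_left (by positivity) amgm_pow

lemma pow_mul_pow_le_of_add_eq_one {a b : ℝ} (ha : 0 ≤ a) (hb : 0 ≤ b) (hab : a + b = 1)
    (n m : ℕ) : a ^ n * b ^ m ≤ ((n : ℝ) / (n + m)) ^ n * ((m : ℝ) / (n + m)) ^ m := by
  have self_div_pow (k : ℕ) : ((k : ℝ) / k) ^ k = 1 := by
    rcases k.eq_zero_or_pos with rfl | hk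
    · simp
    · rw [div_self (by positivity), one_pow]
  rcases n.eq_zero_or_pos with rfl | hn
  · simpa [self_div_pow] using pow_le_one₀ hb (by linarith)
  rcases m.eq_zero_or_pos with rfl | hm
  · simpa [self_div_pow] using pow_le_one₀ ha (by linarith)
  exact pow_mul_pow_le_of_add_eq_one_of_pos ha hb hab hn hm

theorem stmt_2_general (α : ℝ) (hα : α ∈ Set.Icc (0 : ℝ) 1) (m n : ℕ) :
    |fdiff^[m] (fun k => α ^ k) n| = α ^ n * (1 - α) ^ m ∧
    |fdiff^[m] (fun k => α ^ k) n| ≤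
      ((m : ℝ) / (n + m)) ^ m * ((n : ℝ) / (n + m)) ^ n := by
  obtain ⟨hα₀, hα₁⟩ := hα
  have habs : |fdiff^[m] (fun k => α ^ k) n| = α ^ n * (1 - α) ^ m := by
    rw [fdiff_iterate_pow, abs_mul, abs_pow, abs_pow, abs_of_nonneg hα₀, abs_sub_comm,
      abs_of_nonneg (sub_nonneg.2 hα₁)]
  refine ⟨habs, habs ▸ ?_⟩
  exact (pow_mul_pow_le_of_add_eq_one hα₀ (sub_nonneg.2 hα₁) (add_sub_cancel α 1) n m).trans_eq
    (mul_comm _ _)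

/-- The `m`-th forward difference of the geometric sequence `(α^k)` at index `n`
has absolute value `α^n (1-α)^m`, which is at most `(m/(n+m))^m (n/(n+m))^n`,
for `α ∈ [0,1]` and `t ≥ n + m`. -/
theorem stmt_2 (α : ℝ) (hα : α ∈ Set.Icc (0 : ℝ) 1) (m n t : ℕ) (ht : n + m ≤ t) :
    |fdiff^[m] (fun k => α ^ k) n| = α ^ n * (1 - α) ^ m ∧
    |fdiff^[m] (fun k => α ^ k) n| ≤
      ((m : ℝ) / (n + m)) ^ m * ((n : ℝ) / (n + m)) ^ n :=
  stmt_2_general α hα m n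
end

section
/- For any positive integers n and m, it holds that (m/(n+m))^m · (n/(n+m))^n ≤ 1 / 2^{2·min(m,n)}. -/
lemma aux_stmt7 (x y : ℝ) (hx : 0 ≤ x) (hy : 0 ≤ y) (hxy : x + y = 1) (p q : ℕ) (hpq : p ≤ q) :
    x ^ p * y ^ q ≤ 1 / 4 ^ p := by
  have hy1 : y ≤ 1 := by linarith
  have hxy4 : x * y ≤ 1 / 4 := by nlinarith [sq_nonneg (x - y)]
  calc x ^ p * y ^ q = (x * y) ^ p * y ^ (q - p) := by
        rw [mul_pow, mul_assoc, ← pow_add]; congr 2; omega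
    _ ≤ (1/4) ^ p * 1 := by
        apply mul_le_mul (pow_le_pow_left₀ (by positivity) hxy4 p)
          (pow_le_one₀ hy hy1) (by positivity) (by positivity)
    _ = 1 / 4 ^ p := by rw [mul_one, div_pow, one_pow]

/-- For positive integers `n`, `m`:
`(m/(n+m))^m (n/(n+m))^n ≤ 1 / 2^{2 min(m,n)}`. -/
theorem stmt_7 (n m : ℕ) (hn : 0 < n) (hm : 0 < m) :
    ((m : ℝ) / (n + m)) ^ m * ((n : ℝ) / (n + m)) ^ n ≤ 1 / 2 ^ (2 * min m n) := by
  have hs : (0:ℝ) < (n:ℝ) + m := by positivity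
  have hxy : (m:ℝ) / (n + m) + (n:ℝ) / (n + m) = 1 := by field_simp; ring
  have hx : (0:ℝ) ≤ (m:ℝ) / (n + m) := by positivity
  have hy : (0:ℝ) ≤ (n:ℝ) / (n + m) := by positivity
  have h4 : (2:ℝ) ^ (2 * min m n) = 4 ^ (min m n) := by
    rw [pow_mul]; norm_num
  rw [h4]
  rcases le_total m n with h | h
  · rw [min_eq_left h]
    exact aux_stmt7 _ _ hx hy hxy m n h
  · rw [min_eq_right h, mul_comm]
    exact aux_stmt7 _ _ hy hx (by linarith) n m h
end

section
/- Let A be an n×n diagonal real matrix with non-negative diagonal entries, B ∈ ℝ^n, C ∈ ℝ^n, and define Y_k = Σ_{j=1}^n B_j C_j A_{jj}^{k} for k = 0, 1, ..., t−1 (with t ≥ d + m). Then the absolute value of the d-th forward difference of (Y_0, ..., Y_{t−1}) at index m is at most (m/(d+m))^m · (d/(d+m))^d · n · max_j |B_j C_j|, assuming all A_{jj} ∈ [0,1]. -/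
/-!
Forward differencing is linear and acts on a geometric sequence `k ↦ a ^ k` by multiplication
with `a - 1`, so the `d`-th difference of the impulse response at `m` is
`∑ j, B j * C j * (A j - 1) ^ d * A j ^ m`. Each term is bounded by `|B j * C j|` times
`α ^ m * (1 - α) ^ d` with `α = A j ∈ [0, 1]`, and by weighted AM-GM this product is maximal
at `α = m / (d + m)`.
-/

open Finset

theorem pow_mul_pow_le_weighted_mean_pow {x y : ℝ} (hx : 0 ≤ x) (hy : 0 ≤ y) (m d : ℕ) :
    x ^ m * y ^ d ≤ ((m * x + d * y) / (m + d)) ^ (m + d) := by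
  rcases Nat.eq_zero_or_pos (m + d) with h | h
  · simp [Nat.add_eq_zero_iff.mp h]
  have hs : (0 : ℝ) < m + d := by exact_mod_cast h
  have hamgm := Real.geom_mean_le_arith_mean2_weighted (div_nonneg m.cast_nonneg hs.le)
    (div_nonneg d.cast_nonneg hs.le) hx hy (by field_simp)
  have hpow (z : ℝ) (hz : 0 ≤ z) (k : ℕ) : (z ^ ((k : ℝ) / (m + d))) ^ (m + d) = z ^ k := by
    rw [← Real.rpow_natCast, ← Real.rpow_mul hz, ← Real.rpow_natCast]
    congr 1
    push_cast
    field_simp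
  calc x ^ m * y ^ d
      = (x ^ ((m : ℝ) / (m + d)) * y ^ ((d : ℝ) / (m + d))) ^ (m + d) := by
        rw [mul_pow, hpow x hx, hpow y hy]
    _ ≤ ((m * x + d * y) / (m + d)) ^ (m + d) := by
        gcongr
        exact hamgm.trans_eq (by ring)

theorem pow_mul_one_sub_pow_le {α : ℝ} (hα : α ∈ Set.Icc (0 : ℝ) 1) (m d : ℕ) :
    α ^ m * (1 - α) ^ d ≤ ((m : ℝ) / (d + m)) ^ m * ((d : ℝ) / (d + m)) ^ d := by
  obtain ⟨h0, h1⟩ := hα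
  rcases Nat.eq_zero_or_pos m with rfl | hm
  · rcases Nat.eq_zero_or_pos d with rfl | hd
    · simp
    · simpa [div_self (by exact_mod_cast hd.ne' : (d : ℝ) ≠ 0)] using
        pow_le_one₀ (sub_nonneg.mpr h1) (sub_le_self 1 h0)
  rcases Nat.eq_zero_or_pos d with rfl | hd
  · simpa [div_self (by exact_mod_cast hm.ne' : (m : ℝ) ≠ 0)] using pow_le_one₀ h0 h1
  have hm' : (0 : ℝ) < m := by exact_mod_cast hm
  have hd' : (0 : ℝ) < d := by exact_mod_cast hd
  -- `α` and `1 - α` rescaled by the maximiser, so that their `(m, d)`-weighted mean is `1`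
  set x := α * (d + m) / m
  set y := (1 - α) * (d + m) / d
  have hxy : x ^ m * y ^ d ≤ 1 := by
    have hsum : m * x + d * y = m + d := by
      simp only [x, y]
      field_simp
      ring
    calc x ^ m * y ^ d ≤ ((m * x + d * y) / (m + d)) ^ (m + d) :=
          pow_mul_pow_le_weighted_mean_pow (by positivity)
            (div_nonneg (mul_nonneg (sub_nonneg.mpr h1) (by positivity)) hd'.le) m d
      _ = 1 := by rw [hsum, div_self (by positivity), one_pow]
  calc α ^ m * (1 - α) ^ d
      = ((m : ℝ) / (d + m)) ^ m * ((d : ℝ) / (d + m)) ^ d * (x ^ m * y ^ d) := by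
        rw [mul_mul_mul_comm, ← mul_pow, ← mul_pow]
        simp only [x, y]
        field_simp
    _ ≤ ((m : ℝ) / (d + m)) ^ m * ((d : ℝ) / (d + m)) ^ d :=
        mul_le_of_le_one_right (by positivity) hxy

theorem iterate_fdiff_sum_mul_pow {ι : Type*} (s : Finset ι) (c a : ι → ℝ) (d k : ℕ) :
    fdiff^[d] (fun k => ∑ j ∈ s, c j * a j ^ k) k = ∑ j ∈ s, c j * (a j - 1) ^ d * a j ^ k := by
  induction d generalizing k with
  | zero => simp
  | succ d ih =>
    rw [Function.iterate_succ_apply', fdiff, ih, ih, ← sum_sub_distrib]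
    exact sum_congr rfl fun j _ => by ring

theorem stmt_9_general (n d m : ℕ) (hn : 0 < n)
    (A B C : Fin n → ℝ) (hA : ∀ j, A j ∈ Set.Icc (0 : ℝ) 1) :
    |fdiff^[d] (fun k => ∑ j, B j * C j * (A j) ^ k) m| ≤
      ((m : ℝ) / (d + m)) ^ m * ((d : ℝ) / (d + m)) ^ d * n *
        (Finset.univ.sup' (Finset.univ_nonempty_iff.mpr ⟨⟨0, hn⟩⟩)
          (fun j => |B j * C j|)) := by
  set M := univ.sup' (univ_nonempty_iff.mpr ⟨⟨0, hn⟩⟩) fun j => |B j * C j|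
  have hBC (j : Fin n) : |B j * C j| ≤ M := le_sup' (fun j => |B j * C j|) (mem_univ j)
  have hterm (j : Fin n) :
      |B j * C j * (A j - 1) ^ d * A j ^ m| ≤
        ((m : ℝ) / (d + m)) ^ m * ((d : ℝ) / (d + m)) ^ d * M := by
    obtain ⟨h0, h1⟩ := hA j
    rw [mul_assoc, abs_mul, mul_comm _ M, abs_mul (_ ^ d), abs_pow, abs_pow, abs_of_nonneg h0,
      abs_sub_comm, abs_of_nonneg (sub_nonneg.mpr h1), mul_comm (_ ^ d)]
    exact mul_le_mul (hBC j) (pow_mul_one_sub_pow_le (hA j) m d) (by positivity)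
      ((abs_nonneg _).trans (hBC j))
  rw [iterate_fdiff_sum_mul_pow]
  calc |∑ j, B j * C j * (A j - 1) ^ d * A j ^ m|
      ≤ ∑ j, |B j * C j * (A j - 1) ^ d * A j ^ m| := abs_sum_le_sum_abs _ _
    _ ≤ n * (((m : ℝ) / (d + m)) ^ m * ((d : ℝ) / (d + m)) ^ d * M) := by
        simpa using sum_le_card_nsmul univ _ _ fun j _ => hterm j
    _ = _ := by ring

/-- Forward differences of the impulse response of a real diagonal SSM with
non-negative diagonal entries in `[0,1]` are bounded:
`|Y^{(d)}_m| ≤ (m/(d+m))^m (d/(d+m))^d · n · max_j |B_j C_j|`. -/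
theorem stmt_9 (n d m t : ℕ) (hn : 0 < n) (ht : d + m ≤ t)
    (A B C : Fin n → ℝ) (hA : ∀ j, A j ∈ Set.Icc (0 : ℝ) 1) :
    |fdiff^[d] (fun k => ∑ j, B j * C j * (A j) ^ k) m| ≤
      ((m : ℝ) / (d + m)) ^ m * ((d : ℝ) / (d + m)) ^ d * n *
        (Finset.univ.sup' (Finset.univ_nonempty_iff.mpr ⟨⟨0, hn⟩⟩)
          (fun j => |B j * C j|)) :=
  stmt_9_general n d m hn A B C hA
end

section
/- Let n ∈ ℕ, let a_1,...,a_n ∈ [0,1] and b_1,...,b_n ∈ ℝ, and define f: ℕ → ℝ by f(k) = Σ_{j=1}^n b_j a_j^k. Then the number of indices k ∈ {0, 1, ..., t−1} such that f(k)·f(k+1) < 0 (sign changes of consecutive values) is at most n − 1. -/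
open Finset

private lemma sign_aux1 {A B C D : ℝ} (h1 : 0 < A * B) (h2 : 0 < C * D) (h3 : B * D < 0) :
    A * C < 0 := by nlinarith [mul_pos h1 h2]

private lemma sign_aux2 {x y z : ℝ} (h0 : 0 ≤ x * y) (hx : x ≠ 0) (hyz : y * z < 0) :
    x * z < 0 := by
  have hy : y ≠ 0 := by rintro rfl; simp at hyz
  have hxy : 0 < x * y := lt_of_le_of_ne h0 (Ne.symm (mul_ne_zero hx hy))
  nlinarith [mul_neg_of_pos_of_neg hxy hyz, sq_nonneg y]

/-- Key lemma: a sequence which is a linear combination of `n` exponentials with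
nonnegative bases cannot have an alternating chain of more than `n` points. -/
private lemma key (n : ℕ) : ∀ (a b : Fin n → ℝ) (f : ℕ → ℝ), (∀ j, 0 ≤ a j) →
    (∀ k, f k = ∑ j, b j * a j ^ k) →
    ∀ (m : ℕ) (s : ℕ → ℕ),
      (∀ i, i + 2 ≤ m → s i < s (i + 1) ∧ f (s i) * f (s (i + 1)) < 0) →
      2 ≤ m → m ≤ n := by
  induction n with
  | zero =>
    intro a b f ha hf m s hs hm
    exfalso
    have h := (hs 0 hm).2
    rw [hf, hf] at h
    simp at h
  | succ n IH =>
    intro a b f ha hf m s hs hm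
    have hge : ∀ i, i + 1 ≤ m → i ≤ s i := by
      intro i
      induction i with
      | zero => exact fun _ => Nat.zero_le _
      | succ i ih =>
        intro h
        have h1 := ih (by omega)
        have h2 := (hs i (by omega)).1
        omega
    rcases eq_or_lt_of_le (ha 0) with hc0 | hc0
    · -- case a 0 = 0
      have hfg : ∀ k, 1 ≤ k → f k = ∑ j : Fin n, b j.succ * a j.succ ^ k := by
        intro k hk
        rw [hf, Fin.sum_univ_succ, ← hc0, zero_pow (by omega), mul_zero, zero_add]
      by_cases hm' : 2 ≤ m - 1
      · have h := IH (fun j => a j.succ) (fun j => b j.succ)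
          (fun k => ∑ j : Fin n, b j.succ * a j.succ ^ k)
          (fun j => ha j.succ) (fun k => rfl) (m - 1) (fun i => s (i + 1)) ?_ hm'
        · omega
        · intro i hi
          obtain ⟨h1, h2⟩ := hs (i + 1) (by omega)
          have e1 := hfg (s (i + 1)) (by have := hge (i + 1) (by omega); omega)
          have e2 := hfg (s (i + 1 + 1)) (by have := hge (i + 1 + 1) (by omega); omega)
          rw [e1, e2] at h2
          exact ⟨h1, h2⟩
      · rcases Nat.eq_zero_or_pos n with hn | hn
        · exfalso
          obtain ⟨h1, h2⟩ := hs 0 hm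
          have e1 := hfg (s 1) (by have := hge 1 (by omega); omega)
          rw [e1] at h2
          subst hn
          simp at h2
        · omega
    · -- case 0 < a 0
      have hgf : ∀ k, (∑ j : Fin n, (b j.succ * (a j.succ - a 0)) * a j.succ ^ k)
          = f (k + 1) - a 0 * f k := by
        intro k
        rw [hf, hf, Fin.sum_univ_succ (f := fun j => b j * a j ^ (k + 1)),
          Fin.sum_univ_succ (f := fun j => b j * a j ^ k)]
        rw [show (∑ j : Fin n, (b j.succ * (a j.succ - a 0)) * a j.succ ^ k)
            = ∑ j : Fin n, (b j.succ * a j.succ ^ (k + 1) - a 0 * (b j.succ * a j.succ ^ k)) from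
          Finset.sum_congr rfl fun j _ => by ring]
        rw [Finset.sum_sub_distrib, ← Finset.mul_sum]
        ring
      have hexists : ∀ i, i + 2 ≤ m → ∃ k, s i ≤ k ∧ k < s (i + 1) ∧
          0 < (∑ j : Fin n, (b j.succ * (a j.succ - a 0)) * a j.succ ^ k) * f (s (i + 1)) := by
        intro i hi
        obtain ⟨hlt, hprod⟩ := hs i hi
        have hfne : f (s (i + 1)) ≠ 0 := by
          intro h0; rw [h0, mul_zero] at hprod; exact lt_irrefl 0 hprod
        have htel : ∑ k ∈ Ico (s i) (s (i + 1)),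
            ((f (k + 1) / a 0 ^ (k + 1) - f k / a 0 ^ k) * f (s (i + 1)))
            = (f (s (i + 1)) / a 0 ^ (s (i + 1)) - f (s i) / a 0 ^ (s i)) * f (s (i + 1)) := by
          rw [← Finset.sum_mul]
          congr 1
          rw [Finset.sum_Ico_eq_sub _ (le_of_lt hlt),
            Finset.sum_range_sub (fun k => f k / a 0 ^ k),
            Finset.sum_range_sub (fun k => f k / a 0 ^ k)]
          ring
        have hpos : 0 < (f (s (i + 1)) / a 0 ^ (s (i + 1)) - f (s i) / a 0 ^ (s i))
            * f (s (i + 1)) := by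
          have h1 : 0 < f (s (i + 1)) / a 0 ^ (s (i + 1)) * f (s (i + 1)) := by
            rw [div_mul_eq_mul_div]
            exact div_pos (mul_self_pos.mpr hfne) (pow_pos hc0 _)
          have h2 : f (s i) / a 0 ^ (s i) * f (s (i + 1)) < 0 := by
            rw [div_mul_eq_mul_div]
            exact div_neg_of_neg_of_pos hprod (pow_pos hc0 _)
          nlinarith
        rw [← htel] at hpos
        obtain ⟨k, hk, hk2⟩ := Finset.exists_lt_of_sum_lt
          (f := fun _ => (0 : ℝ)) (by simpa using hpos)
        refine ⟨k, (Finset.mem_Ico.mp hk).1, (Finset.mem_Ico.mp hk).2, ?_⟩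
        have hc1 : (0 : ℝ) < a 0 ^ (k + 1) := pow_pos hc0 _
        have heq : (f (k + 1) / a 0 ^ (k + 1) - f k / a 0 ^ k)
            = (f (k + 1) - a 0 * f k) / a 0 ^ (k + 1) := by
          field_simp
          ring
        rw [hgf k]
        rw [heq, div_mul_eq_mul_div] at hk2
        have := mul_pos hk2 hc1
        rwa [div_mul_cancel₀ _ (ne_of_gt hc1)] at this
      choose u hu using hexists
      by_cases hm' : 2 ≤ m - 1
      · have h := IH (fun j => a j.succ) (fun j => b j.succ * (a j.succ - a 0))
          (fun k => ∑ j : Fin n, (b j.succ * (a j.succ - a 0)) * a j.succ ^ k)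
          (fun j => ha j.succ) (fun k => rfl) (m - 1)
          (fun i => if h : i + 2 ≤ m then u i h else 0) ?_ hm'
        · omega
        · intro i hi
          have h1 : i + 2 ≤ m := by omega
          have h2 : i + 1 + 2 ≤ m := by omega
          simp only [dif_pos h1, dif_pos h2]
          obtain ⟨ha1, hb1, hc1⟩ := hu i h1
          obtain ⟨ha2, hb2, hc2⟩ := hu (i + 1) h2
          constructor
          · omega
          · exact sign_aux1 hc1 hc2 (hs (i + 1) h2).2
      · rcases Nat.eq_zero_or_pos n with hn | hn
        · exfalso
          obtain ⟨hk1, hk2, hk3⟩ := hu 0 hm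
          subst hn
          simp at hk3
        · omega

/-- From a set of consecutive sign changes one can extract an alternating chain. -/
private lemma extract (f : ℕ → ℝ) : ∀ (N : ℕ) (T : Finset ℕ) (hne : T.Nonempty),
    T.card = N → (∀ k ∈ T, f k * f (k + 1) < 0) →
    ∃ s : ℕ → ℕ, (∀ i, i + 2 ≤ N + 1 → s i < s (i + 1) ∧ f (s i) * f (s (i + 1)) < 0) ∧
      s N ≤ T.max' hne + 1 := by
  intro N
  induction N with
  | zero =>
    intro T hne hcard _
    exact absurd (Finset.card_eq_zero.mp hcard) hne.ne_empty
  | succ N IH =>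
    intro T hne hcard hT
    rcases Nat.eq_zero_or_pos N with hN | hN
    · subst hN
      obtain ⟨k, hk⟩ := Finset.card_eq_one.mp hcard
      refine ⟨fun i => k + i, ?_, ?_⟩
      · intro i hi
        have hi0 : i = 0 := by omega
        subst hi0
        refine ⟨by simp, ?_⟩
        simpa using hT k (by simp [hk])
      · simp [hk]
    · have hk₀T : T.max' hne ∈ T := T.max'_mem hne
      have hne' : (T.erase (T.max' hne)).Nonempty := by
        rw [← Finset.card_pos, Finset.card_erase_of_mem hk₀T, hcard]; omega
      have hcard' : (T.erase (T.max' hne)).card = N := by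
        rw [Finset.card_erase_of_mem hk₀T, hcard]
        omega
      have hmax' : (T.erase (T.max' hne)).max' hne' < T.max' hne := by
        have h1 := (T.erase (T.max' hne)).max'_mem hne'
        exact lt_of_le_of_ne (T.le_max' _ (Finset.mem_of_mem_erase h1))
          (Finset.ne_of_mem_erase h1)
      obtain ⟨s', hs', hlast⟩ := IH (T.erase (T.max' hne)) hne' hcard'
        (fun k hk => hT k (Finset.mem_of_mem_erase hk))
      have hlast' : s' N ≤ T.max' hne := by omega
      have hfne : f (s' N) ≠ 0 := by
        have h := (hs' (N - 1) (by omega)).2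
        rw [show N - 1 + 1 = N from by omega] at h
        intro h0
        rw [h0, mul_zero] at h
        exact lt_irrefl 0 h
      have hk₀prod := hT (T.max' hne) hk₀T
      by_cases hcase : f (s' N) * f (T.max' hne) < 0
      · refine ⟨fun i => if i ≤ N then s' i else T.max' hne, ?_, ?_⟩
        · intro i hi
          rcases Nat.lt_or_ge i N with h | h
          · simp only [if_pos (by omega : i ≤ N), if_pos (by omega : i + 1 ≤ N)]
            exact hs' i (by omega)
          · have hiN : i = N := by omega
            simp only [hiN, if_pos (le_refl N), if_neg (by omega : ¬(N + 1 ≤ N))]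
            refine ⟨?_, hcase⟩
            rcases lt_or_eq_of_le hlast' with h' | h'
            · exact h'
            · exfalso; rw [h'] at hcase; nlinarith [mul_self_nonneg (f (T.max' hne))]
        · simp only [if_neg (by omega : ¬(N + 1 ≤ N))]
          omega
      · refine ⟨fun i => if i ≤ N then s' i else T.max' hne + 1, ?_, ?_⟩
        · intro i hi
          rcases Nat.lt_or_ge i N with h | h
          · simp only [if_pos (by omega : i ≤ N), if_pos (by omega : i + 1 ≤ N)]
            exact hs' i (by omega)
          · have hiN : i = N := by omega
            simp only [hiN, if_pos (le_refl N), if_neg (by omega : ¬(N + 1 ≤ N))]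
            exact ⟨by omega, sign_aux2 (not_lt.mp hcase) hfne hk₀prod⟩
        · simp only [if_neg (by omega : ¬(N + 1 ≤ N))]
          omega

/-- The number of sign changes of consecutive values of `f(k) = Σ_j b_j a_j^k`,
with bases `a_j ∈ [0,1]`, over `k ∈ {0, ..., t−1}` is at most `n − 1`. -/
theorem stmt_12 (n t : ℕ) (a b : Fin n → ℝ) (ha : ∀ i, a i ∈ Set.Icc (0 : ℝ) 1) :
    ((range t).filter (fun k =>
        (∑ j, b j * a j ^ k) * (∑ j, b j * a j ^ (k + 1)) < 0)).card ≤ n - 1 := by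
  set T := (range t).filter (fun k =>
      (∑ j, b j * a j ^ k) * (∑ j, b j * a j ^ (k + 1)) < 0) with hT
  rcases T.eq_empty_or_nonempty with h | h
  · rw [h]; simp
  · have hTprop : ∀ k ∈ T,
        (fun k => ∑ j, b j * a j ^ k) k * (fun k => ∑ j, b j * a j ^ k) (k + 1) < 0 :=
      fun k hk => (Finset.mem_filter.mp hk).2
    obtain ⟨s, hs, -⟩ := extract (fun k => ∑ j, b j * a j ^ k) T.card T h rfl hTprop
    have hcard : 1 ≤ T.card := Finset.card_pos.mpr h
    have := key n a b (fun k => ∑ j, b j * a j ^ k) (fun j => (ha j).1) (fun k => rfl)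
      (T.card + 1) s hs (by omega)
    omega
end

section
/- Let φ(I) ∈ ℝ^t be any real sequence of length t, and let t ∈ ℕ, α ∈ (0,1) with α = (1/2)^{1/(t−1)}. There exist a diagonal matrix A ∈ ℂ^{t×t} with A_{jj} = α·exp(2πi(j−1)/t), and vectors B, C ∈ ℂ^t with ‖B‖₂ ≤ 2‖φ(I)‖₂ and ‖C‖₂ ≤ 1, such that for every k ∈ {1,...,t}: Re(Σ_{j=1}^t A_{jj}^{k−1} B_j C_j) = φ(I)_k. -/
/-!
Put `ω = exp(2πi/t)` and `c_m = φ_m / α^m`. By orthogonality of the characters `j ↦ ω^{jk}`,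
`c` is recovered from its discrete Fourier transform `ĉ_j = Σ_m c_m ω^{-jm}` as
`c_k = t⁻¹ Σ_j ω^{jk} ĉ_j`, and Plancherel gives `Σ_j |ĉ_j|² = t Σ_m |c_m|²`. Hence
`B = ĉ / √t` and `C_j = 1 / √t` reproduce `α^k c_k = φ_k`, with `‖C‖₂ = 1` and
`‖B‖₂ = ‖c‖₂ ≤ 2 ‖φ‖₂`, because `α^m ≥ α^{t-1} = 1/2` for `m < t`.
-/

open Real Finset

section RootsOfUnity

variable {K : Type*} [Field K]

theorem IsPrimitiveRoot.sum_pow_div_pow {ζ : K} {t : ℕ} (hζ : IsPrimitiveRoot ζ t)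
    (k m : Fin t) :
    ∑ j : Fin t, (ζ ^ (j : ℕ)) ^ (k : ℕ) / (ζ ^ (j : ℕ)) ^ (m : ℕ) =
      if k = m then (t : K) else 0 := by
  have hζ₀ : ζ ≠ 0 := hζ.ne_zero (by have := k.isLt; omega)
  simp_rw [← pow_mul, pow_mul', ← div_pow]
  rw [Fin.sum_univ_eq_sum_range (fun j => (ζ ^ (k : ℕ) / ζ ^ (m : ℕ)) ^ j)]
  split_ifs with hkm
  · simp [hkm, hζ₀]
  · have hne : ζ ^ (k : ℕ) / ζ ^ (m : ℕ) ≠ 1 := by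
      rw [Ne, div_eq_one_iff_eq (pow_ne_zero _ hζ₀)]
      exact fun h => hkm (Fin.ext (hζ.pow_inj k.isLt m.isLt h))
    rw [geom_sum_eq hne, div_pow, ← pow_mul, ← pow_mul, pow_mul', pow_mul' ζ (m : ℕ),
      hζ.pow_eq_one, one_pow, one_pow, div_one, sub_self, zero_div]

def dft {t : ℕ} (ζ : K) (c : Fin t → K) (j : Fin t) : K :=
  ∑ m : Fin t, c m / (ζ ^ (j : ℕ)) ^ (m : ℕ)

theorem IsPrimitiveRoot.sum_pow_mul_dft {ζ : K} {t : ℕ} (hζ : IsPrimitiveRoot ζ t)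
    (c : Fin t → K) (k : Fin t) :
    ∑ j : Fin t, (ζ ^ (j : ℕ)) ^ (k : ℕ) * dft ζ c j = t * c k := by
  simp_rw [dft, mul_sum]
  rw [sum_comm]
  simp_rw [mul_div_left_comm _ (c _), ← mul_sum, hζ.sum_pow_div_pow k, mul_ite, mul_zero]
  rw [sum_ite_eq, if_pos (mem_univ k), mul_comm]

end RootsOfUnity

theorem IsPrimitiveRoot.sum_norm_sq_dft {ζ : ℂ} {t : ℕ} (hζ : IsPrimitiveRoot ζ t)
    (c : Fin t → ℂ) : ∑ j, ‖dft ζ c j‖ ^ 2 = t * ∑ m, ‖c m‖ ^ 2 := by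
  have hconj (j : Fin t) :
      (starRingEnd ℂ) (dft ζ c j) = ∑ m, (starRingEnd ℂ) (c m) * (ζ ^ (j : ℕ)) ^ (m : ℕ) := by
    have hnorm (m : Fin t) : ‖(ζ ^ (j : ℕ)) ^ (m : ℕ)‖ = 1 := by
      rw [norm_pow, norm_pow, hζ.norm'_eq_one (by have := j.isLt; omega), one_pow, one_pow]
    simp_rw [dft, map_sum, div_eq_mul_inv, Complex.inv_eq_conj (hnorm _), map_mul,
      Complex.conj_conj]
  apply Complex.ofReal_injective
  push_cast
  calc ∑ j, (‖dft ζ c j‖ : ℂ) ^ 2 = ∑ j, (starRingEnd ℂ) (dft ζ c j) * dft ζ c j := by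
        simp_rw [Complex.conj_mul']
    _ = ∑ m, (starRingEnd ℂ) (c m) * ∑ j : Fin t, (ζ ^ (j : ℕ)) ^ (m : ℕ) * dft ζ c j := by
        simp_rw [hconj, sum_mul, mul_sum, mul_assoc]
        exact sum_comm
    _ = t * ∑ m, (‖c m‖ : ℂ) ^ 2 := by
        simp_rw [hζ.sum_pow_mul_dft, mul_sum, mul_left_comm _ (t : ℂ), Complex.conj_mul']

theorem IsPrimitiveRoot.exists_realization {ζ : ℂ} {t : ℕ} (hζ : IsPrimitiveRoot ζ t)
    (ht : t ≠ 0) (c : Fin t → ℂ) :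
    ∃ B C : Fin t → ℂ, ∑ j, ‖B j‖ ^ 2 = ∑ m, ‖c m‖ ^ 2 ∧ ∑ j, ‖C j‖ ^ 2 = 1 ∧
      ∀ k : Fin t, ∑ j : Fin t, (ζ ^ (j : ℕ)) ^ (k : ℕ) * B j * C j = c k := by
  set s : ℝ := (√t)⁻¹
  have hs : s ^ 2 * t = 1 := by
    rw [inv_pow, sq_sqrt (Nat.cast_nonneg t), inv_mul_cancel₀ (Nat.cast_ne_zero.mpr ht)]
  have hsC : (s : ℂ) ^ 2 * t = 1 := by exact_mod_cast hs
  have hs_norm : ‖(s : ℂ)‖ ^ 2 = s ^ 2 := by rw [Complex.norm_real, Real.norm_eq_abs, sq_abs]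
  refine ⟨fun j => s * dft ζ c j, fun _ => s, ?_, ?_, fun k => ?_⟩
  · simp_rw [norm_mul, mul_pow, ← mul_sum, hζ.sum_norm_sq_dft, ← mul_assoc, hs_norm, hs, one_mul]
  · rw [sum_const, card_univ, Fintype.card_fin, nsmul_eq_mul, hs_norm, mul_comm, hs]
  · calc ∑ j : Fin t, (ζ ^ (j : ℕ)) ^ (k : ℕ) * (s * dft ζ c j) * s
          = (s : ℂ) ^ 2 * ∑ j : Fin t, (ζ ^ (j : ℕ)) ^ (k : ℕ) * dft ζ c j := by
            rw [mul_sum]; exact sum_congr rfl fun j _ => by ring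
      _ = c k := by rw [hζ.sum_pow_mul_dft, ← mul_assoc, hsC, one_mul]

theorem sqrt_sum_norm_sq_le {ι E : Type*} [SeminormedAddGroup E] (u : Finset ι) (f : ι → E)
    (g : ι → ℝ) {a : ℝ} (ha : 0 ≤ a) (h : ∀ i, ‖f i‖ ≤ a * |g i|) :
    √(∑ i ∈ u, ‖f i‖ ^ 2) ≤ a * √(∑ i ∈ u, g i ^ 2) := by
  rw [← sqrt_sq ha, ← sqrt_mul (sq_nonneg a), mul_sum]
  refine sqrt_le_sqrt (sum_le_sum fun i _ => ?_)
  rw [← mul_pow, ← sq_abs (a * g i), abs_mul, abs_of_nonneg ha]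
  exact pow_le_pow_left₀ (norm_nonneg _) (h i) 2

theorem le_rpow_one_div_pow {x s : ℝ} (hx₀ : 0 < x) (hx₁ : x ≤ 1) {m : ℕ} (hm : (m : ℝ) ≤ s) :
    x ≤ (x ^ (1 / s)) ^ m := by
  rw [← rpow_natCast, ← rpow_mul hx₀.le]
  conv_lhs => rw [← rpow_one x]
  apply rpow_le_rpow_of_exponent_ge hx₀ hx₁
  rw [one_div_mul_eq_div]
  exact div_le_one_of_le₀ hm ((Nat.cast_nonneg m).trans hm)

/-- A complex diagonal SSM of dimension `t`, with diagonal entries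
`A_{jj} = α e^{2πi(j−1)/t}` where `α = (1/2)^{1/(t−1)}`, can express any length-`t`
real impulse response `φ(I)` with `‖B‖₂ ≤ 2‖φ(I)‖₂` and `‖C‖₂ ≤ 1`. -/
theorem stmt_15 (t : ℕ) (ht : 2 ≤ t) (φ : Fin t → ℝ) (α : ℝ)
    (hα : α = (1 / 2 : ℝ) ^ ((1 : ℝ) / ((t : ℝ) - 1))) :
    ∃ B C : Fin t → ℂ,
      Real.sqrt (∑ j, ‖B j‖ ^ 2) ≤
          2 * Real.sqrt (∑ k, (φ k) ^ 2) ∧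
      Real.sqrt (∑ j, ‖C j‖ ^ 2) ≤ 1 ∧
      ∀ k : Fin t,
        (∑ j : Fin t,
            ((α : ℂ) * Complex.exp (2 * π * Complex.I * (j : ℕ) / t)) ^ (k : ℕ) *
              B j * C j).re = φ k := by
  set ω := Complex.exp (2 * π * Complex.I / t)
  have ht₀ : t ≠ 0 := by omega
  have hω : IsPrimitiveRoot ω t := Complex.isPrimitiveRoot_exp t ht₀
  have hexp (j : ℕ) : Complex.exp (2 * π * Complex.I * j / t) = ω ^ j := by
    rw [← Complex.exp_nat_mul]; ring_nf
  have hα₀ : 0 < α := hα ▸ by positivity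
  have hα_inv (m : Fin t) : (α ^ (m : ℕ))⁻¹ ≤ 2 := by
    refine inv_le_of_inv_le₀ two_pos ?_
    rw [hα, ← one_div]
    refine le_rpow_one_div_pow (by norm_num) (by norm_num) ?_
    rw [le_sub_iff_add_le]; exact_mod_cast m.isLt
  obtain ⟨B, C, hB, hC, hBC⟩ := hω.exists_realization ht₀ fun m => (φ m / α ^ (m : ℕ) : ℝ)
  refine ⟨B, C, ?_, by rw [hC, sqrt_one], fun k => ?_⟩
  · refine hB ▸ sqrt_sum_norm_sq_le _ _ _ zero_le_two fun m => ?_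
    rw [Complex.norm_real, norm_div, norm_pow, Real.norm_eq_abs, Real.norm_eq_abs,
      abs_of_pos hα₀, div_eq_inv_mul]
    exact mul_le_mul_of_nonneg_right (hα_inv m) (abs_nonneg _)
  · simp_rw [hexp, mul_pow, mul_assoc, ← mul_sum, ← mul_assoc, hBC]
    rw [← Complex.ofReal_pow, ← Complex.ofReal_mul, Complex.ofReal_re]
    field_simp
end
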